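/- arXiv:1704.01726 — 3 statements merged into one kernel-verified Lean document; each statement's English description precedes it below -/
import Mathlib

section
/- Let f : ℝⁿ → ℝⁿ be locally Lipschitz and satisfy the Kamke–Müller condition. If x solves ẋ(t) = f(x(t)), y is differentiable with ẏ(t) ≤ f(y(t)) componentwise for t ≥ 0, and y(0) ≤ x(0) componentwise, then y(t) ≤ x(t) componentwise for all t ≥ 0. -/
open Set Filter Metric Real
open scoped Topology

/-- Comparison lemma: if `f` is locally Lipschitz and satisfies the Kamke–Müller
condition, `x` solves `ẋ = f(x)`, `y` satisfies the differential inequality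
`ẏ ≤ f(y)` for `t ≥ 0`, and `y(0) ≤ x(0)`, then `y(t) ≤ x(t)` for all `t ≥ 0`. -/
theorem kamke_muller_comparison {n : ℕ}
    (f : (Fin n → ℝ) → (Fin n → ℝ)) (hf : LocallyLipschitz f)
    (hKM : ∀ u v : Fin n → ℝ, u ≤ v → ∀ i : Fin n, u i = v i → f u i ≤ f v i)
    (x y y' : ℝ → Fin n → ℝ)
    (hx : ∀ t : ℝ, 0 ≤ t → HasDerivAt x (f (x t)) t)
    (hy : ∀ t : ℝ, 0 ≤ t → HasDerivAt y (y' t) t)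
    (hy' : ∀ t : ℝ, 0 ≤ t → y' t ≤ f (y t))
    (h0 : y 0 ≤ x 0) :
    ∀ t : ℝ, 0 ≤ t → y t ≤ x t := by
  rcases Nat.eq_zero_or_pos n with hn | hn
  · subst hn; exact fun t _ i => i.elim0
  haveI : Nonempty (Fin n) := ⟨⟨0, hn⟩⟩
  -- the "positive part of the gap" function
  set g : ℝ → ℝ := fun t => ‖(fun j => max (y t j - x t j) 0 : Fin n → ℝ)‖ with hg_def
  have gnonneg : ∀ t, 0 ≤ g t := fun t => norm_nonneg _
  have comp_le : ∀ t j, y t j - x t j ≤ g t := by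
    intro t j
    calc y t j - x t j ≤ max (y t j - x t j) 0 := le_max_left _ _
      _ ≤ |max (y t j - x t j) 0| := le_abs_self _
      _ ≤ g t := by
        simpa [Real.norm_eq_abs] using
          norm_le_pi_norm (fun j => max (y t j - x t j) 0 : Fin n → ℝ) j
  have g_le : ∀ t c, 0 ≤ c → (∀ j, y t j - x t j ≤ c) → g t ≤ c := by
    intro t c hc h
    refine (pi_norm_le_iff_of_nonneg hc).2 fun j => ?_
    rw [Real.norm_eq_abs, abs_of_nonneg (le_max_right _ _)]
    exact max_le (h j) hc
  have gcont : ∀ t, 0 ≤ t → ContinuousAt g t := by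
    intro t ht
    have cx := (hx t ht).continuousAt
    have cy := (hy t ht).continuousAt
    exact (continuousAt_pi.2 fun j =>
      (((continuous_apply j).continuousAt.comp cy).sub
        ((continuous_apply j).continuousAt.comp cx)).max continuousAt_const).norm
  have g_zero_le : ∀ t, g t = 0 → y t ≤ x t := by
    intro t ht i
    have := (comp_le t i).trans (le_of_eq ht)
    linarith
  have dist_shift : ∀ t, dist (fun i => x t i + g t : Fin n → ℝ) (x t) = g t := by
    intro t
    rw [dist_eq_norm]
    have : (fun i => x t i + g t : Fin n → ℝ) - x t = fun _ => g t := by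
      funext i; simp
    rw [this, pi_norm_const, Real.norm_eq_abs, abs_of_nonneg (gnonneg t)]
  -- key local step: if g a = 0 then g stays 0 a bit to the right
  have key : ∀ a b : ℝ, 0 ≤ a → a < b → g a = 0 →
      ∃ c, c ∈ Ioc a b ∧ ∀ s ∈ Icc a c, g s = 0 := by
    intro a b ha0 hab hga
    obtain ⟨K, U, hU, hK⟩ := hf (x a)
    obtain ⟨ρ, hρ, hball⟩ := Metric.mem_nhds_iff.1 hU
    have h1 : ∀ᶠ s in 𝓝 a, dist (x s) (x a) < ρ / 2 :=
      Metric.tendsto_nhds.1 (hx a ha0).continuousAt (ρ / 2) (half_pos hρ)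
    have h2 : ∀ᶠ s in 𝓝 a, g s < ρ / 2 := by
      have : Filter.Tendsto g (𝓝 a) (𝓝 0) := by
        have := gcont a ha0; rwa [ContinuousAt, hga] at this
      exact this.eventually_lt_const (half_pos hρ)
    obtain ⟨δ, hδ, hP⟩ := Metric.eventually_nhds_iff.1 (h1.and h2)
    set c := min b (a + δ / 2) with hc_def
    have hc : c ∈ Ioc a b := ⟨lt_min hab (by linarith), min_le_left _ _⟩
    have hmem : ∀ s ∈ Icc a c, x s ∈ U ∧ (fun i => x s i + g s : Fin n → ℝ) ∈ U := by
      intro s hs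
      have hsd : dist s a < δ := by
        rw [Real.dist_eq, abs_of_nonneg (by linarith [hs.1])]
        have := hs.2.trans (min_le_right b (a + δ / 2))
        linarith
      obtain ⟨e1, e2⟩ := hP hsd
      constructor
      · exact hball (Metric.mem_ball.2 (by linarith))
      · refine hball (Metric.mem_ball.2 ?_)
        calc dist (fun i => x s i + g s : Fin n → ℝ) (x a)
            ≤ dist (fun i => x s i + g s : Fin n → ℝ) (x s) + dist (x s) (x a) :=
              dist_triangle _ _ _
          _ < ρ := by rw [dist_shift s]; linarith
    have hcont : ContinuousOn g (Icc a c) := fun s hs =>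
      (gcont s (ha0.trans hs.1)).continuousWithinAt
    have hf' : ∀ t ∈ Ico a c, ∀ r, (K : ℝ) * g t < r →
        ∃ᶠ z in 𝓝[>] t, (z - t)⁻¹ * (g z - g t) < r := by
      intro t ht r hr
      have ht0 : (0:ℝ) ≤ t := ha0.trans ht.1
      have htc : t ∈ Icc a c := ⟨ht.1, le_of_lt ht.2⟩
      set r' : ℝ := ((K : ℝ) * g t + r) / 2 with hr'_def
      have hKg : (0:ℝ) ≤ (K : ℝ) * g t := mul_nonneg K.coe_nonneg (gnonneg t)
      have h1' : (K : ℝ) * g t < r' := by rw [hr'_def]; linarith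
      have h2' : r' < r := by rw [hr'_def]; linarith
      have hr0 : 0 ≤ r' := le_of_lt (lt_of_le_of_lt hKg h1')
      have per_j : ∀ j, ∀ᶠ z in 𝓝[>] t, y z j - x z j ≤ g t + r' * (z - t) := by
        intro j
        rcases (comp_le t j).lt_or_eq with hd | hd
        · -- strictly below the max: use continuity
          have hcj : ContinuousAt (fun z => y z j - x z j) t :=
            ((continuous_apply j).continuousAt.comp (hy t ht0).continuousAt).sub
              ((continuous_apply j).continuousAt.comp (hx t ht0).continuousAt)
          have hev : ∀ᶠ z in 𝓝 t, y z j - x z j < g t := hcj.eventually_lt_const hd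
          filter_upwards [nhdsWithin_le_nhds hev, self_mem_nhdsWithin] with z hz1 hz2
          have : 0 ≤ r' * (z - t) := mul_nonneg hr0 (by exact sub_nonneg.2 (le_of_lt hz2))
          linarith
        · -- the max is attained: use the differential inequality + KM + Lipschitz
          set v : Fin n → ℝ := fun i => x t i + g t with hv_def
          have hle : y t ≤ v := fun i => by
            have := comp_le t i; simp only [hv_def]; linarith
          have heq : y t j = v j := by simp only [hv_def]; linarith
          have hDlt : y' t j - f (x t) j < r' := by
            have e1 : y' t j ≤ f (y t) j := hy' t ht0 j
            have e2 : f (y t) j ≤ f v j := hKM (y t) v hle j heq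
            have e3 : f v j - f (x t) j ≤ ‖f v - f (x t)‖ := by
              calc f v j - f (x t) j = (f v - f (x t)) j := by simp
                _ ≤ |(f v - f (x t)) j| := le_abs_self _
                _ = ‖(f v - f (x t)) j‖ := (Real.norm_eq_abs _).symm
                _ ≤ ‖f v - f (x t)‖ := norm_le_pi_norm _ j
            have e5 : dist (f v) (f (x t)) ≤ (K : ℝ) * dist v (x t) :=
              hK.dist_le_mul v ((hmem t htc).2) (x t) ((hmem t htc).1)
            rw [dist_shift t] at e5
            rw [← dist_eq_norm] at e3
            linarith
          have hDer : HasDerivAt (fun z => y z j - x z j) (y' t j - f (x t) j) t :=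
            ((hasDerivAt_pi.1 (hy t ht0)) j).sub ((hasDerivAt_pi.1 (hx t ht0)) j)
          have hslope : Filter.Tendsto (slope (fun z => y z j - x z j) t) (𝓝[>] t)
              (𝓝 (y' t j - f (x t) j)) :=
            (hasDerivAt_iff_tendsto_slope.1 hDer).mono_left
              (nhdsWithin_mono t fun z hz => hz.ne')
          filter_upwards [hslope.eventually_lt_const hDlt, self_mem_nhdsWithin] with z hz1 hz2
          rw [slope_def_field] at hz1
          have hpos : (0:ℝ) < z - t := sub_pos.2 hz2
          have := (div_lt_iff₀ hpos).1 hz1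
          linarith [hd]
      refine Filter.Eventually.frequently ?_
      filter_upwards [Filter.eventually_all.2 per_j, self_mem_nhdsWithin] with z hz hzt
      have hpos : (0:ℝ) < z - t := sub_pos.2 hzt
      have hgz : g z ≤ g t + r' * (z - t) :=
        g_le z _ (add_nonneg (gnonneg t) (mul_nonneg hr0 (le_of_lt hpos))) hz
      rw [inv_mul_eq_div, div_lt_iff₀ hpos]
      have := mul_lt_mul_of_pos_right h2' hpos
      linarith
    have hmain := le_gronwallBound_of_liminf_deriv_right_le (f := g)
      (f' := fun t => (K : ℝ) * g t) (δ := 0) (K := (K : ℝ)) (ε := 0)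
      hcont hf' (le_of_eq hga) (fun t _ => by simp)
    refine ⟨c, hc, fun s hs => le_antisymm ?_ (gnonneg s)⟩
    have := hmain s hs
    rwa [gronwallBound_ε0_δ0] at this
  -- global argument via sSup
  intro T hT
  set S : Set ℝ := {t | t ≤ T ∧ ∀ s ∈ Icc 0 t, g s = 0} with hS_def
  have hg0 : g 0 = 0 :=
    le_antisymm (g_le 0 0 le_rfl fun j => sub_nonpos.2 (h0 j)) (gnonneg 0)
  have h0S : (0:ℝ) ∈ S := by
    refine ⟨hT, fun s hs => ?_⟩
    have : s = 0 := le_antisymm hs.2 hs.1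
    rw [this]; exact hg0
  have hbdd : BddAbove S := ⟨T, fun t ht => ht.1⟩
  set c := sSup S with hc_def
  have h0c : 0 ≤ c := le_csSup hbdd h0S
  have hcT : c ≤ T := csSup_le ⟨0, h0S⟩ fun t ht => ht.1
  have hIco : ∀ s ∈ Ico 0 c, g s = 0 := by
    intro s hs
    obtain ⟨t, htS, hst⟩ := exists_lt_of_lt_csSup ⟨0, h0S⟩ hs.2
    exact htS.2 s ⟨hs.1, le_of_lt hst⟩
  have hgc : g c = 0 := by
    rcases eq_or_lt_of_le h0c with h | h
    · rw [← h]; exact hg0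
    · have t1 : Filter.Tendsto g (𝓝[<] c) (𝓝 (g c)) :=
        ((gcont c h0c).continuousWithinAt : ContinuousWithinAt g (Iio c) c)
      have t2 : Filter.Tendsto g (𝓝[<] c) (𝓝 0) := by
        have hev : ∀ᶠ s in 𝓝[<] c, g s = 0 := by
          filter_upwards [Ioo_mem_nhdsLT_of_mem (⟨h, le_rfl⟩ : c ∈ Ioc 0 c)] with s hs
          exact hIco s ⟨le_of_lt hs.1, hs.2⟩
        exact Filter.Tendsto.congr' (hev.mono fun s h => h.symm) tendsto_const_nhds
      exact tendsto_nhds_unique t1 t2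
  have hcS : c ∈ S := by
    refine ⟨hcT, fun s hs => ?_⟩
    rcases eq_or_lt_of_le hs.2 with h | h
    · rw [h]; exact hgc
    · exact hIco s ⟨hs.1, h⟩
  rcases eq_or_lt_of_le hcT with hEq | hlt2
  · exact g_zero_le T (by rw [← hEq]; exact hgc)
  · exfalso
    obtain ⟨c', hc', hzero⟩ := key c T h0c hlt2 hgc
    have hc'S : c' ∈ S := by
      refine ⟨hc'.2, fun s hs => ?_⟩
      rcases le_total s c with h' | h'
      · exact hcS.2 s ⟨hs.1, h'⟩
      · exact hzero s ⟨h', hs.2⟩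
    exact absurd (le_csSup hbdd hc'S) (not_le.2 hc'.1)
end

section
/- Consider the two-node SIS system: ⟨SI⟩' = −(τ+γ)⟨SI⟩ + γ⟨II⟩, ⟨IS⟩' = −(τ+γ)⟨IS⟩ + γ⟨II⟩, ⟨II⟩' = −2γ⟨II⟩ + τ⟨SI⟩ + τ⟨IS⟩, ⟨SS⟩' = γ⟨SI⟩ + γ⟨IS⟩, with τ, γ > 0 and all four functions nonnegative. Then A(t) = ⟨II⟩(t)⟨SS⟩(t) − ⟨SI⟩(t)⟨IS⟩(t) satisfies Ȧ = −2(τ+γ)A + b with b(t) = τ(⟨SI⟩⟨SS⟩ + ⟨IS⟩⟨SS⟩ + 2⟨II⟩⟨SS⟩) ≥ 0; hence A(0) ≥ 0 implies A(t) ≥ 0 for all t ≥ 0. -/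
/-!
Expanding `(II·SS − SI·IS)'` with the master equation, the terms `γ·II·(SI + IS)` cancel and
what remains is `−2(τ+γ)A + τ(SI·SS + IS·SS + 2·II·SS)`, whose forcing term is nonnegative on
nonnegative states. The integrating factor `e^{2(τ+γ)t}` then makes `A` times it nondecreasing,
so `A(0) ≥ 0` propagates forward in time.
-/

open Set

theorem nonneg_of_hasDerivAt_of_neg_mul_le (c : ℝ) {A a : ℝ → ℝ}
    (hA : ∀ t, 0 ≤ t → HasDerivAt A (a t) t) (hle : ∀ t, 0 ≤ t → -c * A t ≤ a t)
    (h0 : 0 ≤ A 0) {t : ℝ} (ht : 0 ≤ t) : 0 ≤ A t := by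
  have hderiv : ∀ s, 0 ≤ s →
      HasDerivAt (fun u => A u * Real.exp (c * u)) ((a s + c * A s) * Real.exp (c * s)) s := by
    intro s hs
    have hexp := ((hasDerivAt_id s).const_mul c).exp
    simp only [id, mul_one] at hexp
    exact ((hA s hs).mul hexp).congr_deriv (by ring)
  have hmono : MonotoneOn (fun u => A u * Real.exp (c * u)) (Ici 0) := by
    refine monotoneOn_of_hasDerivWithinAt_nonneg (convex_Ici 0)
      (fun s hs => (hderiv s hs).continuousAt.continuousWithinAt)
      (fun s hs => (hderiv s (interior_subset hs)).hasDerivWithinAt) fun s hs => ?_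
    have := hle s (interior_subset hs)
    have := Real.exp_pos (c * s)
    nlinarith
  have := hmono self_mem_Ici ht ht
  simp only [mul_zero, Real.exp_zero, mul_one] at this
  exact nonneg_of_mul_nonneg_left (h0.trans this) (Real.exp_pos _)

theorem two_node_SIS_nonneg_correlation_general (τ γ : ℝ) (hτ : 0 < τ)
    (SI IS II SS : ℝ → ℝ)
    (hpos : ∀ t : ℝ, 0 ≤ t → 0 ≤ SI t ∧ 0 ≤ IS t ∧ 0 ≤ II t ∧ 0 ≤ SS t)
    (hSI : ∀ t : ℝ, 0 ≤ t → HasDerivAt SI (-(τ + γ) * SI t + γ * II t) t)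
    (hIS : ∀ t : ℝ, 0 ≤ t → HasDerivAt IS (-(τ + γ) * IS t + γ * II t) t)
    (hII : ∀ t : ℝ, 0 ≤ t → HasDerivAt II (-2 * γ * II t + τ * SI t + τ * IS t) t)
    (hSS : ∀ t : ℝ, 0 ≤ t → HasDerivAt SS (γ * SI t + γ * IS t) t) :
    (∀ t : ℝ, 0 ≤ t →
      HasDerivAt (fun s => II s * SS s - SI s * IS s)
        (-2 * (τ + γ) * (II t * SS t - SI t * IS t) +
          τ * (SI t * SS t + IS t * SS t + 2 * II t * SS t)) t ∧
      0 ≤ τ * (SI t * SS t + IS t * SS t + 2 * II t * SS t)) ∧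
    (0 ≤ II 0 * SS 0 - SI 0 * IS 0 →
      ∀ t : ℝ, 0 ≤ t → 0 ≤ II t * SS t - SI t * IS t) := by
  have hA : ∀ t, 0 ≤ t → HasDerivAt (fun s => II s * SS s - SI s * IS s)
      (-2 * (τ + γ) * (II t * SS t - SI t * IS t) +
        τ * (SI t * SS t + IS t * SS t + 2 * II t * SS t)) t := fun t ht =>
    (((hII t ht).mul (hSS t ht)).sub ((hSI t ht).mul (hIS t ht))).congr_deriv (by ring)
  have hb : ∀ t, 0 ≤ t → 0 ≤ τ * (SI t * SS t + IS t * SS t + 2 * II t * SS t) := by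
    intro t ht
    obtain ⟨h₁, h₂, h₃, h₄⟩ := hpos t ht
    positivity
  exact ⟨fun t ht => ⟨hA t ht, hb t ht⟩, fun h0 t ht =>
    nonneg_of_hasDerivAt_of_neg_mul_le (2 * (τ + γ)) hA (fun s hs => by linarith [hb s hs]) h0 ht⟩

/-- Two-node SIS system: `A = ⟨II⟩⟨SS⟩ - ⟨SI⟩⟨IS⟩` satisfies
`Ȧ = -2(τ+γ)A + b` with `b = τ(⟨SI⟩⟨SS⟩ + ⟨IS⟩⟨SS⟩ + 2⟨II⟩⟨SS⟩) ≥ 0`;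
hence `A(0) ≥ 0` implies `A(t) ≥ 0` for `t ≥ 0`. -/
theorem two_node_SIS_nonneg_correlation (τ γ : ℝ) (hτ : 0 < τ) (hγ : 0 < γ)
    (SI IS II SS : ℝ → ℝ)
    (hpos : ∀ t : ℝ, 0 ≤ t → 0 ≤ SI t ∧ 0 ≤ IS t ∧ 0 ≤ II t ∧ 0 ≤ SS t)
    (hSI : ∀ t : ℝ, 0 ≤ t → HasDerivAt SI (-(τ + γ) * SI t + γ * II t) t)
    (hIS : ∀ t : ℝ, 0 ≤ t → HasDerivAt IS (-(τ + γ) * IS t + γ * II t) t)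
    (hII : ∀ t : ℝ, 0 ≤ t → HasDerivAt II (-2 * γ * II t + τ * SI t + τ * IS t) t)
    (hSS : ∀ t : ℝ, 0 ≤ t → HasDerivAt SS (γ * SI t + γ * IS t) t) :
    (∀ t : ℝ, 0 ≤ t →
      HasDerivAt (fun s => II s * SS s - SI s * IS s)
        (-2 * (τ + γ) * (II t * SS t - SI t * IS t) +
          τ * (SI t * SS t + IS t * SS t + 2 * II t * SS t)) t ∧
      0 ≤ τ * (SI t * SS t + IS t * SS t + 2 * II t * SS t)) ∧
    (0 ≤ II 0 * SS 0 - SI 0 * IS 0 →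
      ∀ t : ℝ, 0 ≤ t → 0 ≤ II t * SS t - SI t * IS t) :=
  two_node_SIS_nonneg_correlation_general τ γ hτ SI IS II SS hpos hSI hIS hII hSS
end

section
/- Let G be the adjacency matrix of a directed, weighted, strongly connected network with largest eigenvalue Λ, and let τ, γ > 0 with γ > τΛ. Suppose W : [0,1]² → [0,1] satisfies W(x,y) ≥ xy. Then the only steady state x ∈ [0,1]ᴺ of the system ẋ_i = τ Σ_j g_{ij}(x_j − W(x_i,x_j)) − γ x_i is x = 0. -/
/-!
At a steady state, `W(xᵢ, xⱼ) ≥ xᵢ xⱼ ≥ 0` gives `c • x ≤ G x` componentwise with `c = γ / τ`,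
hence `c ^ k • x ≤ G ^ k x` for all `k` since `G` is nonnegative. By Gelfand's formula `‖G ^ k‖`
is eventually at most `r ^ k` for any `r` above the spectral radius, which is at most `Λ < c`;
taking `r < c` forces `xᵢ ≤ (r / c) ^ k ‖x‖ → 0`.
-/

open Filter Topology
open scoped Matrix Matrix.Norms.Operator

theorem eventually_norm_pow_le_of_spectralRadius_lt {A : Type*} [NormedRing A]
    [NormedAlgebra ℂ A] [CompleteSpace A] {a : A} {r : ℝ}
    (h : spectralRadius ℂ a < ENNReal.ofReal r) :
    ∀ᶠ k : ℕ in atTop, ‖a ^ k‖ ≤ r ^ k := by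
  filter_upwards [(spectrum.pow_norm_pow_one_div_tendsto_nhds_spectralRadius a).eventually_lt_const
    h, eventually_ne_atTop 0] with k hk hk0
  rw [ENNReal.ofReal_lt_ofReal_iff'] at hk
  calc ‖a ^ k‖ = (‖a ^ k‖ ^ (1 / k : ℝ)) ^ k := by
        rw [one_div, Real.rpow_inv_natCast_pow (norm_nonneg _) hk0]
    _ ≤ r ^ k := pow_le_pow_left₀ (by positivity) hk.1.le k

namespace Matrix

variable {n α : Type*} [Fintype n]

theorem mulVec_mono_of_nonneg [CommSemiring α] [PartialOrder α] [IsOrderedRing α]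
    {A : Matrix n n α} (hA : ∀ i j, 0 ≤ A i j) {v w : n → α} (hvw : v ≤ w) :
    A *ᵥ v ≤ A *ᵥ w := fun i =>
  Finset.sum_le_sum fun j _ => mul_le_mul_of_nonneg_left (hvw j) (hA i j)

theorem pow_smul_le_pow_mulVec [DecidableEq n] [CommSemiring α] [PartialOrder α]
    [IsOrderedRing α] {A : Matrix n n α} (hA : ∀ i j, 0 ≤ A i j) {c : α} (hc : 0 ≤ c)
    {x : n → α} (hcx : c • x ≤ A *ᵥ x) (k : ℕ) : c ^ k • x ≤ (A ^ k) *ᵥ x := by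
  induction k with
  | zero => simp
  | succ k ih =>
    calc c ^ (k + 1) • x = c • c ^ k • x := by rw [pow_succ', mul_smul]
      _ ≤ c • ((A ^ k) *ᵥ x) := smul_le_smul_of_nonneg_left ih hc
      _ = (A ^ k) *ᵥ (c • x) := (mulVec_smul _ _ _).symm
      _ ≤ (A ^ k) *ᵥ (A *ᵥ x) := mulVec_mono_of_nonneg (pow_apply_nonneg hA k) hcx
      _ = (A ^ (k + 1)) *ᵥ x := by rw [mulVec_mulVec, pow_succ]

theorem linfty_opNorm_map_ofReal (A : Matrix n n ℝ) :
    ‖A.map (Complex.ofReal : ℝ → ℂ)‖ = ‖A‖ := by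
  simp only [linfty_opNorm_def, map_apply, Complex.nnnorm_real]

variable [DecidableEq n]

theorem spectralRadius_le_of_forall_hasEigenvalue (A : Matrix n n ℂ) {Λ : ℝ}
    (hΛ : ∀ μ : ℂ, Module.End.HasEigenvalue (toLin' A) μ → ‖μ‖ ≤ Λ) :
    spectralRadius ℂ A ≤ ENNReal.ofReal Λ := by
  refine iSup₂_le fun μ hμ => ?_
  rw [← spectrum_toLin', ← Module.End.hasEigenvalue_iff_mem_spectrum] at hμ
  rw [← ENNReal.ofReal_coe_nnreal, coe_nnnorm]
  exact ENNReal.ofReal_le_ofReal (hΛ μ hμ)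

theorem eq_zero_of_smul_le_mulVec_of_spectralRadius_lt {A : Matrix n n ℝ}
    (hA : ∀ i j, 0 ≤ A i j) {x : n → ℝ} (hx : 0 ≤ x) {c : ℝ} (hcx : c • x ≤ A *ᵥ x)
    (hρ : spectralRadius ℂ (A.map (Complex.ofReal : ℝ → ℂ)) < ENNReal.ofReal c) :
    x = 0 := by
  have hc : 0 < c := ENNReal.ofReal_pos.mp (pos_of_gt hρ)
  obtain ⟨b, hρb, hbc⟩ := exists_between hρ
  set r := b.toReal
  have hb : ENNReal.ofReal r = b := ENNReal.ofReal_toReal hbc.ne_top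
  have hrc : r < c := ENNReal.toReal_lt_of_lt_ofReal hbc
  have hgrowth : ∀ᶠ k : ℕ in atTop, ‖A ^ k‖ ≤ r ^ k := by
    filter_upwards [eventually_norm_pow_le_of_spectralRadius_lt (hb ▸ hρb)] with k hk
    calc ‖A ^ k‖ = ‖(A ^ k).map (Complex.ofReal : ℝ → ℂ)‖ := (linfty_opNorm_map_ofReal _).symm
      _ = ‖A.map (Complex.ofReal : ℝ → ℂ) ^ k‖ := congrArg norm (A.map_pow Complex.ofRealHom k)
      _ ≤ r ^ k := hk
  ext i
  refine le_antisymm ?_ (hx i)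
  have hbound : ∀ᶠ k : ℕ in atTop, x i ≤ (r / c) ^ k * ‖x‖ := by
    filter_upwards [hgrowth] with k hk
    have hck : c ^ k * x i ≤ r ^ k * ‖x‖ :=
      calc c ^ k * x i ≤ ((A ^ k) *ᵥ x) i := pow_smul_le_pow_mulVec hA hc.le hcx k i
        _ ≤ ‖(A ^ k) *ᵥ x‖ := (Real.le_norm_self _).trans (norm_le_pi_norm _ i)
        _ ≤ ‖A ^ k‖ * ‖x‖ := linfty_opNorm_mulVec _ _
        _ ≤ r ^ k * ‖x‖ := mul_le_mul_of_nonneg_right hk (norm_nonneg x)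
    rw [div_pow, div_mul_eq_mul_div, le_div_iff₀ (pow_pos hc k)]
    linarith
  have hlim : Tendsto (fun k : ℕ => (r / c) ^ k * ‖x‖) atTop (𝓝 0) := by
    simpa using (tendsto_pow_atTop_nhds_zero_of_lt_one (div_nonneg ENNReal.toReal_nonneg hc.le)
      ((div_lt_one hc).mpr hrc)).mul_const ‖x‖
  exact ge_of_tendsto hlim hbound

end Matrix

theorem smul_le_mulVec_of_steadyState {n : Type*} [Fintype n] {G : Matrix n n ℝ}
    (hG : ∀ i j, 0 ≤ G i j) {τ γ : ℝ} (hτ : 0 < τ) {W : ℝ → ℝ → ℝ}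
    (hW : ∀ x y : ℝ, x ∈ Set.Icc (0:ℝ) 1 → y ∈ Set.Icc (0:ℝ) 1 → x * y ≤ W x y)
    {x : n → ℝ} (hx : ∀ i, x i ∈ Set.Icc (0:ℝ) 1)
    (hss : ∀ i, τ * ∑ j, G i j * (x j - W (x i) (x j)) - γ * x i = 0) :
    (γ / τ) • x ≤ G *ᵥ x := by
  intro i
  have hsum : ∑ j, G i j * (x j - W (x i) (x j)) ≤ (G *ᵥ x) i :=
    Finset.sum_le_sum fun j _ => mul_le_mul_of_nonneg_left
      (by linarith [hW _ _ (hx i) (hx j), mul_nonneg (hx i).1 (hx j).1]) (hG i j)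
  rw [Pi.smul_apply, smul_eq_mul, div_mul_eq_mul_div, div_le_iff₀ hτ]
  linarith [hss i, mul_le_mul_of_nonneg_left hsum hτ.le]

theorem disease_free_unique_steady_state_general {N : ℕ} (G : Matrix (Fin N) (Fin N) ℝ)
    (hG : ∀ i j, 0 ≤ G i j)
    (Λ τ γ : ℝ) (hτ : 0 < τ) (hγ : 0 < γ)
    (hΛmax : ∀ μ : ℂ, Module.End.HasEigenvalue
      (Matrix.toLin' (G.map (Complex.ofReal : ℝ → ℂ))) μ → ‖μ‖ ≤ Λ)
    (hthr : γ > τ * Λ)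
    (W : ℝ → ℝ → ℝ)
    (hW : ∀ x y : ℝ, x ∈ Set.Icc (0:ℝ) 1 → y ∈ Set.Icc (0:ℝ) 1 →
      x * y ≤ W x y)
    (x : Fin N → ℝ) (hx : ∀ i, x i ∈ Set.Icc (0:ℝ) 1)
    (hss : ∀ i : Fin N,
      τ * ∑ j, G i j * (x j - W (x i) (x j)) - γ * x i = 0) :
    x = 0 := by
  refine Matrix.eq_zero_of_smul_le_mulVec_of_spectralRadius_lt hG (fun i => (hx i).1)
    (smul_le_mulVec_of_steadyState hG hτ hW hx hss) ?_
  calc spectralRadius ℂ (G.map (Complex.ofReal : ℝ → ℂ)) ≤ ENNReal.ofReal Λ :=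
        Matrix.spectralRadius_le_of_forall_hasEigenvalue _ hΛmax
    _ < ENNReal.ofReal (γ / τ) :=
        (ENNReal.ofReal_lt_ofReal_iff (div_pos hγ hτ)).mpr ((lt_div_iff₀' hτ).mpr hthr)

/-- First half of Theorem 5.8: for a strongly connected (irreducible) nonnegative
adjacency matrix `G` with largest eigenvalue `Λ`, if `γ > τΛ` and `W(x,y) ≥ xy`
then the only steady state in `[0,1]^N` of the closed SIS model is `x = 0`. -/
theorem disease_free_unique_steady_state {N : ℕ} (G : Matrix (Fin N) (Fin N) ℝ)
    (hG : ∀ i j, 0 ≤ G i j)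
    (hirr : ∀ i j : Fin N, ∃ k : ℕ, 0 < (G ^ k) i j)
    (Λ τ γ : ℝ) (hτ : 0 < τ) (hγ : 0 < γ)
    (hΛeig : Module.End.HasEigenvalue
      (Matrix.toLin' (G.map (Complex.ofReal : ℝ → ℂ))) (Λ : ℂ))
    (hΛmax : ∀ μ : ℂ, Module.End.HasEigenvalue
      (Matrix.toLin' (G.map (Complex.ofReal : ℝ → ℂ))) μ → ‖μ‖ ≤ Λ)
    (hthr : γ > τ * Λ)
    (W : ℝ → ℝ → ℝ)
    (hWrange : ∀ x y : ℝ, x ∈ Set.Icc (0:ℝ) 1 → y ∈ Set.Icc (0:ℝ) 1 →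
      W x y ∈ Set.Icc (0:ℝ) 1)
    (hW : ∀ x y : ℝ, x ∈ Set.Icc (0:ℝ) 1 → y ∈ Set.Icc (0:ℝ) 1 →
      x * y ≤ W x y)
    (x : Fin N → ℝ) (hx : ∀ i, x i ∈ Set.Icc (0:ℝ) 1)
    (hss : ∀ i : Fin N,
      τ * ∑ j, G i j * (x j - W (x i) (x j)) - γ * x i = 0) :
    x = 0 :=
  disease_free_unique_steady_state_general G hG Λ τ γ hτ hγ hΛmax hthr W hW x hx hss
end
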